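/- Angle estimate for wave cones: there is a universal constant C such that for all sign choices ±, ±₁, ±₂ ∈ {+1, -1}, all exponents a, b, c ∈ [0, 1/2], all real numbers λ, μ, and all nonzero η, ζ ∈ ℝ², the angle θ(±₁η, ±₂ζ) between the vectors ±₁η and ±₂ζ satisfies θ(±₁η, ±₂ζ) ≤ C [ (⟨-(λ+μ) ± |η+ζ|⟩ / min(⟨η⟩, ⟨ζ⟩))^a + (⟨-λ ±₁ |η|⟩ / min(⟨η⟩, ⟨ζ⟩))^b + (⟨-μ ±₂ |ζ|⟩ / min(⟨η⟩, ⟨ζ⟩))^c ]. -/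

import Mathlib

open InnerProductGeometry Real

noncomputable section

/-- Japanese bracket `⟨r⟩ = (1 + r²)^{1/2}`. -/
def jb (r : ℝ) : ℝ := Real.sqrt (1 + r ^ 2)

lemma core1 (n1 n2 s c : ℝ) (h2 : 0 < n2) (h : n1 ≤ n2)
    (hs1 : s ≤ n1 + n2)
    (hc : 2 * n1 * n2 * c = s ^ 2 - n1 ^ 2 - n2 ^ 2) (h1 : 0 < n1) :
    n1 * (1 - c) ≤ 2 * (n1 + n2 - s) := by
  nlinarith [mul_nonneg (mul_nonneg h1.le (by linarith : (0:ℝ) ≤ n1 + n2 - s))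
    (by linarith : (0:ℝ) ≤ 3 * n2 - n1 - s), mul_pos h1 h2]

lemma core2 (n1 n2 s c : ℝ) (h1 : 0 < n1) (h2 : 0 < n2)
    (hs1 : s ≤ n1 + n2) (hs3 : n2 - n1 ≤ s)
    (hc : 2 * n1 * n2 * c = -(s ^ 2 - n1 ^ 2 - n2 ^ 2)) :
    n1 * (1 - c) ≤ 2 * (s + n1 - n2) := by
  nlinarith [mul_nonneg (mul_nonneg h1.le (by linarith : (0:ℝ) ≤ s + n1 - n2))
    (by linarith : (0:ℝ) ≤ 3 * n2 + n1 - s), mul_pos h1 h2]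

lemma key_alg (n1 n2 s e e₁ e₂ c : ℝ) (h1 : 0 < n1) (h2 : 0 < n2)
    (hs1 : s ≤ n1 + n2) (hs2 : n1 - n2 ≤ s) (hs3 : n2 - n1 ≤ s)
    (he : e = 1 ∨ e = -1) (he1 : e₁ = 1 ∨ e₁ = -1) (he2 : e₂ = 1 ∨ e₂ = -1)
    (hc : 2 * n1 * n2 * c = e₁ * e₂ * (s ^ 2 - n1 ^ 2 - n2 ^ 2)) :
    min n1 n2 * (1 - c) ≤ 2 * |e * s - e₁ * n1 - e₂ * n2| := by
  have habs1 := le_abs_self (e * s - e₁ * n1 - e₂ * n2)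
  have habs2 := neg_abs_le (e * s - e₁ * n1 - e₂ * n2)
  rcases le_total n1 n2 with h | h <;>
    [rw [min_eq_left h]; rw [min_eq_right h]] <;>
    rcases he1 with rfl | rfl <;> rcases he2 with rfl | rfl
  · have := core1 n1 n2 s c h2 h hs1 (by linarith) h1
    rcases he with rfl | rfl <;> linarith
  · have := core2 n1 n2 s c h1 h2 hs1 hs3 (by linarith)
    rcases he with rfl | rfl <;> linarith
  · have := core2 n1 n2 s c h1 h2 hs1 hs3 (by linarith)
    rcases he with rfl | rfl <;> linarith
  · have := core1 n1 n2 s c h2 h hs1 (by linarith) h1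
    rcases he with rfl | rfl <;> linarith
  · have := core1 n2 n1 s c h1 h (by linarith) (by linarith) h2
    rcases he with rfl | rfl <;> linarith
  · have := core2 n2 n1 s c h2 h1 (by linarith) (by linarith) (by linarith)
    rcases he with rfl | rfl <;> linarith
  · have := core2 n2 n1 s c h2 h1 (by linarith) (by linarith) (by linarith)
    rcases he with rfl | rfl <;> linarith
  · have := core1 n2 n1 s c h1 h (by linarith) (by linarith) h2
    rcases he with rfl | rfl <;> linarith

lemma jb_pos (x : ℝ) : 0 < jb x := Real.sqrt_pos.mpr (by positivity)
lemma one_le_jb (x : ℝ) : 1 ≤ jb x := by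
  have h : Real.sqrt 1 ≤ jb x := Real.sqrt_le_sqrt (by nlinarith [sq_nonneg x])
  simpa using h
lemma abs_le_jb (x : ℝ) : |x| ≤ jb x := by
  rw [← Real.sqrt_sq_eq_abs]
  exact Real.sqrt_le_sqrt (by nlinarith)
lemma jb_mono {x y : ℝ} (hx : 0 ≤ x) (hxy : x ≤ y) : jb x ≤ jb y :=
  Real.sqrt_le_sqrt (by nlinarith)
lemma jb_le_two_mul {x : ℝ} (hx : 1 ≤ x) : jb x ≤ 2 * x := by
  have h : jb x ≤ Real.sqrt ((2 * x) ^ 2) := Real.sqrt_le_sqrt (by nlinarith)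
  rwa [Real.sqrt_sq (by linarith)] at h
lemma jb_le_two {x : ℝ} (hx0 : 0 ≤ x) (hx : x ≤ 1) : jb x ≤ 2 := by
  have h : jb x ≤ Real.sqrt (2 ^ 2) := Real.sqrt_le_sqrt (by nlinarith)
  rwa [Real.sqrt_sq (by norm_num)] at h
lemma sqrt_add_three (x y z : ℝ) (hx : 0 ≤ x) (hy : 0 ≤ y) (hz : 0 ≤ z) :
    Real.sqrt (x + y + z) ≤ Real.sqrt x + Real.sqrt y + Real.sqrt z := by
  have hsq : x + y + z ≤ (Real.sqrt x + Real.sqrt y + Real.sqrt z) ^ 2 := by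
    nlinarith [Real.sq_sqrt hx, Real.sq_sqrt hy, Real.sq_sqrt hz,
      Real.sqrt_nonneg x, Real.sqrt_nonneg y, Real.sqrt_nonneg z,
      mul_nonneg (Real.sqrt_nonneg x) (Real.sqrt_nonneg y),
      mul_nonneg (Real.sqrt_nonneg x) (Real.sqrt_nonneg z),
      mul_nonneg (Real.sqrt_nonneg y) (Real.sqrt_nonneg z)]
  calc Real.sqrt (x + y + z) ≤ Real.sqrt ((Real.sqrt x + Real.sqrt y + Real.sqrt z) ^ 2) :=
        Real.sqrt_le_sqrt hsq
    _ = _ := Real.sqrt_sq (by positivity)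

lemma geom {E : Type*} [NormedAddCommGroup E] [InnerProductSpace ℝ E]
    (η ζ : E) (hη : η ≠ 0) (hζ : ζ ≠ 0) (e e₁ e₂ : ℝ)
    (he : e = 1 ∨ e = -1) (he1 : e₁ = 1 ∨ e₁ = -1) (he2 : e₂ = 1 ∨ e₂ = -1) :
    min ‖η‖ ‖ζ‖ * (angle (e₁ • η) (e₂ • ζ)) ^ 2 ≤
      π ^ 2 * |e * ‖η + ζ‖ - e₁ * ‖η‖ - e₂ * ‖ζ‖| := by
  have h1 : (0:ℝ) < ‖η‖ := norm_pos_iff.mpr hη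
  have h2 : (0:ℝ) < ‖ζ‖ := norm_pos_iff.mpr hζ
  have hn1 : ‖e₁ • η‖ = ‖η‖ := by
    rw [norm_smul, Real.norm_eq_abs]; rcases he1 with rfl | rfl <;> simp
  have hn2 : ‖e₂ • ζ‖ = ‖ζ‖ := by
    rw [norm_smul, Real.norm_eq_abs]; rcases he2 with rfl | rfl <;> simp
  set θ := angle (e₁ • η) (e₂ • ζ) with hθ
  have hθ0 : 0 ≤ θ := angle_nonneg _ _
  have hθπ : θ ≤ π := angle_le_pi _ _
  have hinner : inner ℝ (e₁ • η) (e₂ • ζ) = e₁ * e₂ * inner ℝ η ζ := by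
    rw [real_inner_smul_left, real_inner_smul_right]; ring
  have hsq : ‖η + ζ‖ ^ 2 = ‖η‖ ^ 2 + 2 * inner ℝ η ζ + ‖ζ‖ ^ 2 := by
    rw [← real_inner_self_eq_norm_sq, ← real_inner_self_eq_norm_sq,
      ← real_inner_self_eq_norm_sq, inner_add_add_self, real_inner_comm ζ η]; ring
  have he12 : e₁ * e₂ * (e₁ * e₂) = 1 := by
    rcases he1 with rfl | rfl <;> rcases he2 with rfl | rfl <;> norm_num
  have hcosrel : 2 * ‖η‖ * ‖ζ‖ * Real.cos θ =
      e₁ * e₂ * (‖η + ζ‖ ^ 2 - ‖η‖ ^ 2 - ‖ζ‖ ^ 2) := by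
    have hcc := cos_angle_mul_norm_mul_norm (e₁ • η) (e₂ • ζ)
    rw [hn1, hn2, hinner, ← hθ] at hcc
    have hI : ‖η + ζ‖ ^ 2 - ‖η‖ ^ 2 - ‖ζ‖ ^ 2 = 2 * inner ℝ η ζ := by linarith
    rw [hI]; linear_combination 2 * hcc
  have hs2 : ‖η‖ - ‖ζ‖ ≤ ‖η + ζ‖ := by
    have := norm_add_le (η + ζ) (-ζ); simp at this; linarith
  have hs3 : ‖ζ‖ - ‖η‖ ≤ ‖η + ζ‖ := by
    have := norm_add_le (η + ζ) (-η); simp at this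
    rw [add_comm] at this; linarith [norm_add_le η ζ]
  have hkey := key_alg ‖η‖ ‖ζ‖ ‖η + ζ‖ e e₁ e₂ (Real.cos θ) h1 h2
    (norm_add_le _ _) hs2 hs3 he he1 he2 hcosrel
  have hP : (0:ℝ) < π ^ 2 := by positivity
  have hjordan : Real.cos θ ≤ 1 - 2 / π ^ 2 * θ ^ 2 :=
    Real.cos_le_one_sub_mul_cos_sq (by rw [abs_of_nonneg hθ0]; exact hθπ)
  have hj1 : 2 / π ^ 2 * θ ^ 2 ≤ 1 - Real.cos θ := by linarith
  rw [div_mul_eq_mul_div, div_le_iff₀ hP] at hj1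
  have hmin : (0:ℝ) < min ‖η‖ ‖ζ‖ := lt_min h1 h2
  have h5 := mul_le_mul_of_nonneg_right hkey hP.le
  have h6 := mul_le_mul_of_nonneg_left hj1 hmin.le
  nlinarith [h5, h6]

/-- **angle estimate for wave cones.** There is a universal constant `C`
such that for all sign choices `±, ±₁, ±₂ ∈ {+1,-1}`, all exponents `a, b, c ∈ [0, 1/2]`,
all reals `λ, μ` and all nonzero `η, ζ ∈ ℝ²`,
`θ(±₁η, ±₂ζ) ≤ C [ (⟨-(λ+μ) ± |η+ζ|⟩/min(⟨η⟩,⟨ζ⟩))^a + (⟨-λ ±₁ |η|⟩/min(⟨η⟩,⟨ζ⟩))^b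
                  + (⟨-μ ±₂ |ζ|⟩/min(⟨η⟩,⟨ζ⟩))^c ]`. -/
theorem angle_wave_cone_estimate : ∃ C : ℝ, 0 < C ∧
    ∀ e e₁ e₂ : ℝ, (e = 1 ∨ e = -1) → (e₁ = 1 ∨ e₁ = -1) → (e₂ = 1 ∨ e₂ = -1) →
    ∀ a b c : ℝ, a ∈ Set.Icc (0:ℝ) (1/2) → b ∈ Set.Icc (0:ℝ) (1/2) → c ∈ Set.Icc (0:ℝ) (1/2) →
    ∀ lam mu : ℝ, ∀ η ζ : EuclideanSpace ℝ (Fin 2), η ≠ 0 → ζ ≠ 0 →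
      angle (e₁ • η) (e₂ • ζ) ≤
        C * ((jb (-(lam + mu) + e * ‖η + ζ‖) / min (jb ‖η‖) (jb ‖ζ‖)) ^ a
            + (jb (-lam + e₁ * ‖η‖) / min (jb ‖η‖) (jb ‖ζ‖)) ^ b
            + (jb (-mu + e₂ * ‖ζ‖) / min (jb ‖η‖) (jb ‖ζ‖)) ^ c) := by
  refine ⟨100, by norm_num, ?_⟩
  intro e e₁ e₂ he he1 he2 a b c ha hb hc lam mu η ζ hη hζ
  obtain ⟨ha0, ha2⟩ := ha
  obtain ⟨hb0, hb2⟩ := hb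
  obtain ⟨hc0, hc2⟩ := hc
  have h1 : (0:ℝ) < ‖η‖ := norm_pos_iff.mpr hη
  have h2 : (0:ℝ) < ‖ζ‖ := norm_pos_iff.mpr hζ
  set A : ℝ := -(lam + mu) + e * ‖η + ζ‖ with hA
  set B : ℝ := -lam + e₁ * ‖η‖ with hB
  set Cq : ℝ := -mu + e₂ * ‖ζ‖ with hCq
  set m : ℝ := min (jb ‖η‖) (jb ‖ζ‖) with hm
  have hm1 : 1 ≤ m := le_min (one_le_jb _) (one_le_jb _)
  have hm0 : (0:ℝ) < m := by linarith
  set rA : ℝ := jb A / m with hrA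
  set rB : ℝ := jb B / m with hrB
  set rC : ℝ := jb Cq / m with hrC
  have hrA0 : 0 < rA := div_pos (jb_pos _) hm0
  have hrB0 : 0 < rB := div_pos (jb_pos _) hm0
  have hrC0 : 0 < rC := div_pos (jb_pos _) hm0
  set θ : ℝ := angle (e₁ • η) (e₂ • ζ) with hθ
  have hθ0 : 0 ≤ θ := angle_nonneg _ _
  have hθπ : θ ≤ π := angle_le_pi _ _
  have hπ4 : π ≤ 4 := by linarith [Real.pi_le_four]
  have htA : (0:ℝ) ≤ rA ^ a := Real.rpow_nonneg hrA0.le a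
  have htB : (0:ℝ) ≤ rB ^ b := Real.rpow_nonneg hrB0.le b
  have htC : (0:ℝ) ≤ rC ^ c := Real.rpow_nonneg hrC0.le c
  rcases le_or_gt 1 rA with hA1 | hA1
  · have : (1:ℝ) ≤ rA ^ a := Real.one_le_rpow hA1 ha0
    linarith
  rcases le_or_gt 1 rB with hB1 | hB1
  · have : (1:ℝ) ≤ rB ^ b := Real.one_le_rpow hB1 hb0
    linarith
  rcases le_or_gt 1 rC with hC1 | hC1
  · have : (1:ℝ) ≤ rC ^ c := Real.one_le_rpow hC1 hc0
    linarith
  -- all ratios < 1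
  have hha : rA ^ ((1:ℝ)/2) ≤ rA ^ a := Real.rpow_le_rpow_of_exponent_ge hrA0 hA1.le ha2
  have hhb : rB ^ ((1:ℝ)/2) ≤ rB ^ b := Real.rpow_le_rpow_of_exponent_ge hrB0 hB1.le hb2
  have hhc : rC ^ ((1:ℝ)/2) ≤ rC ^ c := Real.rpow_le_rpow_of_exponent_ge hrC0 hC1.le hc2
  rw [← Real.sqrt_eq_rpow] at hha hhb hhc
  have hsA := Real.sqrt_nonneg rA
  have hsB := Real.sqrt_nonneg rB
  have hsC := Real.sqrt_nonneg rC
  suffices h : θ ≤ 100 * (Real.sqrt rA + Real.sqrt rB + Real.sqrt rC) by linarith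
  set M : ℝ := min ‖η‖ ‖ζ‖ with hM
  have hM0 : 0 < M := lt_min h1 h2
  have hmeq : m = jb M := by
    rcases le_total ‖η‖ ‖ζ‖ with h | h
    · rw [hm, hM, min_eq_left h, min_eq_left (jb_mono h1.le h)]
    · rw [hm, hM, min_eq_right h, min_eq_right (jb_mono h2.le h)]
  rcases le_total M 1 with hMle | hMge
  · -- small frequencies: m ≤ 2, so rA ≥ 1/2 and √rA ≥ 1/2
    have hm2 : m ≤ 2 := by rw [hmeq]; exact jb_le_two hM0.le hMle
    have hrAhalf : (1:ℝ)/2 ≤ rA := by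
      rw [hrA, le_div_iff₀ hm0]
      have := one_le_jb A; linarith
    have : (1:ℝ)/2 ≤ Real.sqrt rA := by
      have h14 : Real.sqrt (1/4 : ℝ) ≤ Real.sqrt rA := Real.sqrt_le_sqrt (by linarith)
      rwa [show (1/4:ℝ) = (1/2)^2 by norm_num, Real.sqrt_sq (by norm_num)] at h14
    linarith
  · -- large frequencies: use the geometric estimate
    have hgeom := geom η ζ hη hζ e e₁ e₂ he he1 he2
    rw [← hθ, ← hM] at hgeom
    set D : ℝ := e * ‖η + ζ‖ - e₁ * ‖η‖ - e₂ * ‖ζ‖ with hD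
    have hDabs : |D| ≤ jb A + jb B + jb Cq := by
      have hDeq : D = A - B - Cq := by rw [hD, hA, hB, hCq]; ring
      calc |D| = |A - B - Cq| := by rw [hDeq]
        _ ≤ |A - B| + |Cq| := abs_sub _ _
        _ ≤ (|A| + |B|) + |Cq| := by linarith [abs_sub A B]
        _ ≤ jb A + jb B + jb Cq := by
            linarith [abs_le_jb A, abs_le_jb B, abs_le_jb Cq]
    have hm2M : m ≤ 2 * M := by rw [hmeq]; exact jb_le_two_mul hMge
    have eA : rA * m = jb A := div_mul_cancel₀ _ hm0.ne'
    have eB : rB * m = jb B := div_mul_cancel₀ _ hm0.ne'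
    have eC : rC * m = jb Cq := div_mul_cancel₀ _ hm0.ne'
    have hjbsum : jb A + jb B + jb Cq = (rA + rB + rC) * m := by
      linear_combination -eA - eB - eC
    have hP16 : π ^ 2 ≤ 16 := by
      calc π ^ 2 ≤ 4 ^ 2 := pow_le_pow_left₀ Real.pi_pos.le hπ4 2
        _ = 16 := by norm_num
    have hsum0 : (0:ℝ) ≤ rA + rB + rC := by linarith
    have s1 : M * θ ^ 2 ≤ 16 * |D| := by
      have := mul_le_mul_of_nonneg_right hP16 (abs_nonneg D)
      linarith
    have s2 : |D| ≤ (rA + rB + rC) * (2 * M) := by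
      have := mul_le_mul_of_nonneg_left hm2M hsum0
      linarith [hDabs, hjbsum.le, hjbsum.ge]
    have s3 : M * θ ^ 2 ≤ 32 * (rA + rB + rC) * M := by
      have := mul_le_mul_of_nonneg_left s2 (by norm_num : (0:ℝ) ≤ 16)
      linarith
    have hθsq : θ ^ 2 ≤ 32 * (rA + rB + rC) := by
      by_contra hcon
      push_neg at hcon
      have := mul_lt_mul_of_pos_left hcon hM0
      linarith
    have hθle : θ ≤ Real.sqrt (32 * (rA + rB + rC)) := by
      rw [← Real.sqrt_sq hθ0]
      exact Real.sqrt_le_sqrt hθsq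
    have h32 : Real.sqrt (32 * (rA + rB + rC)) ≤ 6 * Real.sqrt (rA + rB + rC) := by
      rw [Real.sqrt_mul (by norm_num) _]
      have h6 : Real.sqrt 32 ≤ 6 := by
        have := Real.sqrt_le_sqrt (by norm_num : (32:ℝ) ≤ 36)
        rwa [show (36:ℝ) = 6^2 by norm_num, Real.sqrt_sq (by norm_num)] at this
      exact mul_le_mul_of_nonneg_right h6 (Real.sqrt_nonneg _)
    have hsplit := sqrt_add_three rA rB rC hrA0.le hrB0.le hrC0.le
    linarith

end
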